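/- arXiv:2605.18820 — 2 statements merged into one kernel-verified Lean document; each statement's English description precedes it below -/
import Mathlib

section
/- Let K ≥ 1, a ∈ ℝ^K, and let S ⊆ {1,…,K} be nonempty with min_{i∈S} a_i − max_{j∉S} a_j ≥ Δ. Then 0 ≤ log(Σ_{j=1}^K e^{a_j}) − log(Σ_{i∈S} e^{a_i}) ≤ (K − |S|)·e^{−Δ}/|S|. Consequently, writing ā = (1/|S|)·Σ_{i∈S} a_i and CE(softmax(a), Unif(S)) = log(Σ_{j=1}^K e^{a_j}) − ā for the cross-entropy of the softmax distribution against the uniform distribution on S, one has log(Σ_{i∈S} e^{a_i}) − ā ≤ CE(softmax(a), Unif(S)) ≤ log(Σ_{i∈S} e^{a_i}) − ā + (K − |S|)·e^{−Δ}/|S|, and moreover log(Σ_{i∈S} e^{a_i}) − ā ≥ log|S|. -/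
/-!
Write `E = ∑_{i ∈ S} e^{a_i}` and `T = ∑_j e^{a_j}`. By the gap, each of the `K - |S|` terms of `T`
outside `S` is at most `e^{-Δ}` times every term of `E`, hence at most `e^{-Δ} E / |S|`; so
`T / E ≤ 1 + (K - |S|) e^{-Δ} / |S|`, and `log x ≤ x - 1` bounds `log T - log E`.
Since `log softmax(a)_i = a_i - log T`, the cross-entropy against `Unif(S)` is `log T - ā`, and
Jensen's inequality for `exp` with uniform weights on `S` gives `|S| e^{ā} ≤ E`.
-/

open Finset Real

section LogSumExp

variable {ι : Type*} (a : ι → ℝ)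

lemma log_sum_exp_le_log_sum_exp_of_subset {s t : Finset ι} (hs : s.Nonempty) (hst : s ⊆ t) :
    log (∑ i ∈ s, exp (a i)) ≤ log (∑ i ∈ t, exp (a i)) :=
  log_le_log (sum_pos (fun _ _ => exp_pos _) hs)
    (sum_le_sum_of_subset_of_nonneg hst fun _ _ _ => (exp_pos _).le)

variable {s : Finset ι} {Δ : ℝ}

lemma log_card_le_log_sum_exp_sub_mean (hs : s.Nonempty) :
    log #s ≤ log (∑ i ∈ s, exp (a i)) - (#s : ℝ)⁻¹ * ∑ i ∈ s, a i := by
  have hcard : (0 : ℝ) < #s := by exact_mod_cast hs.card_pos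
  have hjensen : exp (∑ i ∈ s, (#s : ℝ)⁻¹ • a i) ≤ ∑ i ∈ s, (#s : ℝ)⁻¹ • exp (a i) :=
    convexOn_exp.map_sum_le (fun _ _ => by positivity) (by simp [hcard.ne'])
      fun _ _ => Set.mem_univ _
  simp only [smul_eq_mul, ← mul_sum] at hjensen
  have hlog := log_le_log (exp_pos _) hjensen
  rw [log_exp, log_mul (inv_ne_zero hcard.ne') (sum_pos (fun _ _ => exp_pos _) hs).ne',
    log_inv] at hlog
  linarith

lemma exp_le_exp_neg_mul_sum_exp_div_card (hs : s.Nonempty) {j : ι}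
    (hgap : ∀ i ∈ s, Δ ≤ a i - a j) :
    exp (a j) ≤ exp (-Δ) * (∑ i ∈ s, exp (a i)) / #s := by
  have hcard : (0 : ℝ) < #s := by exact_mod_cast hs.card_pos
  have hsum : #s * exp (Δ + a j) ≤ ∑ i ∈ s, exp (a i) := by
    simpa using card_nsmul_le_sum s _ _ fun i hi => exp_le_exp.2 (by linarith [hgap i hi])
  rw [le_div_iff₀ hcard]
  calc exp (a j) * #s = exp (-Δ) * (#s * exp (Δ + a j)) := by
        rw [mul_left_comm, ← exp_add]; ring_nf
    _ ≤ exp (-Δ) * ∑ i ∈ s, exp (a i) := by gcongr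

variable [Fintype ι]

lemma neg_mean_log_softmax (hs : s.Nonempty) :
    -((#s : ℝ)⁻¹ * ∑ i ∈ s, log (exp (a i) / ∑ j, exp (a j))) =
      log (∑ j, exp (a j)) - (#s : ℝ)⁻¹ * ∑ i ∈ s, a i := by
  have hT : 0 < ∑ j, exp (a j) := sum_pos (fun _ _ => exp_pos _) ⟨hs.choose, mem_univ _⟩
  have hcard : (#s : ℝ) ≠ 0 := by exact_mod_cast hs.card_pos.ne'
  simp_rw [log_div (exp_pos _).ne' hT.ne', log_exp, sum_sub_distrib, sum_const, nsmul_eq_mul]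
  field_simp
  ring

variable [DecidableEq ι]

lemma sum_compl_exp_le (hs : s.Nonempty) (hgap : ∀ i ∈ s, ∀ j ∉ s, Δ ≤ a i - a j) :
    ∑ j ∈ sᶜ, exp (a j) ≤ #sᶜ * (exp (-Δ) * (∑ i ∈ s, exp (a i)) / #s) := by
  simpa using sum_le_card_nsmul sᶜ _ _ fun j hj =>
    exp_le_exp_neg_mul_sum_exp_div_card a hs fun i hi => hgap i hi j (mem_compl.1 hj)

lemma log_sum_exp_sub_log_sum_exp_le (hs : s.Nonempty)
    (hgap : ∀ i ∈ s, ∀ j ∉ s, Δ ≤ a i - a j) :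
    log (∑ j, exp (a j)) - log (∑ i ∈ s, exp (a i)) ≤ #sᶜ * exp (-Δ) / #s := by
  set E := ∑ i ∈ s, exp (a i)
  have hE : 0 < E := sum_pos (fun _ _ => exp_pos _) hs
  have hcard : (0 : ℝ) < #s := by exact_mod_cast hs.card_pos
  rw [← sum_add_sum_compl s, ← log_div (by positivity) hE.ne']
  calc log ((E + ∑ j ∈ sᶜ, exp (a j)) / E)
      ≤ (E + ∑ j ∈ sᶜ, exp (a j)) / E - 1 := log_le_sub_one_of_pos (by positivity)
    _ = (∑ j ∈ sᶜ, exp (a j)) / E := by field_simp; ring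
    _ ≤ #sᶜ * (exp (-Δ) * E / #s) / E := by gcongr; exact sum_compl_exp_le a hs hgap
    _ = #sᶜ * exp (-Δ) / #s := by field_simp

end LogSumExp

theorem stmt7_general (K : ℕ) (a : Fin K → ℝ)
    (S : Finset (Fin K)) (hS : S.Nonempty) (Δ : ℝ)
    (hgap : ∀ i ∈ S, ∀ j ∉ S, Δ ≤ a i - a j)
    (abar CE : ℝ)
    (habar : abar = (S.card : ℝ)⁻¹ * ∑ i ∈ S, a i)
    (hCE : CE = -((S.card : ℝ)⁻¹ *
      ∑ i ∈ S, Real.log (Real.exp (a i) / ∑ j, Real.exp (a j)))) :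
    (0 ≤ Real.log (∑ j, Real.exp (a j)) - Real.log (∑ i ∈ S, Real.exp (a i))) ∧
    (Real.log (∑ j, Real.exp (a j)) - Real.log (∑ i ∈ S, Real.exp (a i)) ≤
        ((K : ℝ) - S.card) * Real.exp (-Δ) / S.card) ∧
    (CE = Real.log (∑ j, Real.exp (a j)) - abar) ∧
    (Real.log (∑ i ∈ S, Real.exp (a i)) - abar ≤ CE) ∧
    (CE ≤ Real.log (∑ i ∈ S, Real.exp (a i)) - abar +
        ((K : ℝ) - S.card) * Real.exp (-Δ) / S.card) ∧
    (Real.log (S.card : ℝ) ≤ Real.log (∑ i ∈ S, Real.exp (a i)) - abar) := by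
  have hcompl : (#Sᶜ : ℝ) = K - #S := by
    rw [card_compl, Fintype.card_fin, Nat.cast_sub (by simpa using S.card_le_univ)]
  have hsubset := log_sum_exp_le_log_sum_exp_of_subset a hS (subset_univ S)
  have hgap_bound := log_sum_exp_sub_log_sum_exp_le a hS hgap
  rw [hcompl] at hgap_bound
  have hCE_eq : CE = log (∑ j, exp (a j)) - abar := by
    rw [hCE, habar, neg_mean_log_softmax a hS]
  exact ⟨by linarith, hgap_bound, hCE_eq, by linarith, by linarith,
    habar ▸ log_card_le_log_sum_exp_sub_mean a hS⟩

/-- Under the softmax saturation gap `Δ` on a nonempty set `S`: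
`0 ≤ log Σ_j e^{a_j} − log Σ_{i∈S} e^{a_i} ≤ (K−|S|)e^{−Δ}/|S|`; the cross-entropy of
`softmax(a)` against `Unif(S)` equals `log Σ_j e^{a_j} − ā`, hence is sandwiched between
`log Σ_{i∈S} e^{a_i} − ā` and `log Σ_{i∈S} e^{a_i} − ā + (K−|S|)e^{−Δ}/|S|`, and moreover
`log Σ_{i∈S} e^{a_i} − ā ≥ log |S|`. -/
theorem stmt7 (K : ℕ) (hK : 1 ≤ K) (a : Fin K → ℝ)
    (S : Finset (Fin K)) (hS : S.Nonempty) (Δ : ℝ)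
    (hgap : ∀ i ∈ S, ∀ j ∉ S, Δ ≤ a i - a j)
    (abar CE : ℝ)
    (habar : abar = (S.card : ℝ)⁻¹ * ∑ i ∈ S, a i)
    (hCE : CE = -((S.card : ℝ)⁻¹ *
      ∑ i ∈ S, Real.log (Real.exp (a i) / ∑ j, Real.exp (a j)))) :
    (0 ≤ Real.log (∑ j, Real.exp (a j)) - Real.log (∑ i ∈ S, Real.exp (a i))) ∧
    (Real.log (∑ j, Real.exp (a j)) - Real.log (∑ i ∈ S, Real.exp (a i)) ≤
        ((K : ℝ) - S.card) * Real.exp (-Δ) / S.card) ∧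
    (CE = Real.log (∑ j, Real.exp (a j)) - abar) ∧
    (Real.log (∑ i ∈ S, Real.exp (a i)) - abar ≤ CE) ∧
    (CE ≤ Real.log (∑ i ∈ S, Real.exp (a i)) - abar +
        ((K : ℝ) - S.card) * Real.exp (-Δ) / S.card) ∧
    (Real.log (S.card : ℝ) ≤ Real.log (∑ i ∈ S, Real.exp (a i)) - abar) :=
  stmt7_general K a S hS Δ hgap abar CE habar hCE
end

section
/- Let d ≥ 1, let (u_v)_{v∈[n]} be an orthonormal family in ℝ^d, let V ⊆ [n] be nonempty with |V| = k, and set z* = k^{-1/2}·Σ_{v∈V} u_v. Let z ∈ ℝ^d satisfy ‖z − z*‖ ≤ 1/(4√k). Let s_1, …, s_m ∈ [n] be edge sources, let F = {i ∈ [m] : s_i ∈ V} be nonempty, let β > 0, and define attention weights a_i = exp(β·⟨z, u_{s_i}⟩)/Σ_{j=1}^m exp(β·⟨z, u_{s_j}⟩). Then the frontier selectivity satisfies Σ_{i∈F} a_i ≥ 1 − m·exp(−β/(2√k)). -/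
open scoped RealInnerProductSpace

theorem softmax_aux (M : ℕ) (ℓ : Fin M → ℝ) (F : Finset (Fin M)) (i₀ : Fin M) (hi₀ : i₀ ∈ F)
    (A B : ℝ) (hB : B ≤ ℓ i₀) (hA : ∀ i, i ∉ F → ℓ i ≤ A) :
    1 - (M : ℝ) * Real.exp (A - B) ≤ (∑ i ∈ F, Real.exp (ℓ i)) / ∑ j, Real.exp (ℓ j) := by
  set E : Fin M → ℝ := fun i => Real.exp (ℓ i) with hE
  set S : ℝ := ∑ j, E j with hS
  have hSlb : Real.exp B ≤ S :=
    le_trans (Real.exp_le_exp.mpr hB)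
      (Finset.single_le_sum (fun j _ => (Real.exp_pos _).le) (Finset.mem_univ i₀))
  have hSpos : 0 < S := lt_of_lt_of_le (Real.exp_pos B) hSlb
  have hsplit : (∑ i ∈ F, E i) + ∑ i ∈ Fᶜ, E i = S :=
    Finset.sum_add_sum_compl F E
  have hSoutub : (∑ i ∈ Fᶜ, E i) ≤ (M : ℝ) * Real.exp A := by
    calc (∑ i ∈ Fᶜ, E i) ≤ (Fᶜ.card) • Real.exp A := by
          apply Finset.sum_le_card_nsmul
          intro i hi
          exact Real.exp_le_exp.mpr (hA i (Finset.mem_compl.mp hi))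
      _ ≤ (M : ℝ) * Real.exp A := by
          rw [nsmul_eq_mul]
          apply mul_le_mul_of_nonneg_right _ (Real.exp_pos _).le
          calc ((Fᶜ.card : ℝ)) ≤ (Finset.univ.card : ℝ) := by
                exact_mod_cast Finset.card_le_card (Finset.subset_univ _)
            _ = (M : ℝ) := by simp
  have key : (∑ i ∈ Fᶜ, E i) ≤ (M : ℝ) * Real.exp (A - B) * S := by
    calc (∑ i ∈ Fᶜ, E i) ≤ (M : ℝ) * Real.exp A := hSoutub
      _ = (M : ℝ) * Real.exp (A - B) * Real.exp B := by
          rw [mul_assoc, ← Real.exp_add]; ring_nf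
      _ ≤ (M : ℝ) * Real.exp (A - B) * S := by
          apply mul_le_mul_of_nonneg_left hSlb
          positivity
  rw [le_div_iff₀ hSpos]
  have hFeq : (∑ i ∈ F, E i) = S - ∑ i ∈ Fᶜ, E i := by rw [← hsplit]; ring
  rw [hFeq]
  nlinarith [hSpos]

/-- Selectivity bootstrap: with an orthonormal family `u` in `ℝ^d`, the ideal state `z*`
on a nonempty `V` of size `k`, a residual `z` with `‖z − z*‖ ≤ 1/(4√k)`, edge sources
`s_1,…,s_M`, a nonempty frontier `F = {i : s_i ∈ V}`, and inverse temperature `β > 0`,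
the softmax attention mass on the frontier satisfies
`Σ_{i∈F} a_i ≥ 1 − M·e^{−β/(2√k)}`. -/
theorem stmt12 (d n : ℕ) (hd : 1 ≤ d)
    (u : Fin n → EuclideanSpace ℝ (Fin d)) (hu : Orthonormal ℝ u)
    (V : Finset (Fin n)) (hV : V.Nonempty) (k : ℕ) (hk : V.card = k)
    (zstar z : EuclideanSpace ℝ (Fin d))
    (hzstar : zstar = (Real.sqrt (k : ℝ))⁻¹ • ∑ v ∈ V, u v)
    (hz : ‖z - zstar‖ ≤ 1 / (4 * Real.sqrt (k : ℝ)))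
    (M : ℕ) (s : Fin M → Fin n) (F : Finset (Fin M))
    (hF : F = Finset.univ.filter (fun i => s i ∈ V)) (hFne : F.Nonempty)
    (β : ℝ) (hβ : 0 < β) :
    1 - (M : ℝ) * Real.exp (-(β / (2 * Real.sqrt (k : ℝ)))) ≤
      ∑ i ∈ F, Real.exp (β * ⟪z, u (s i)⟫) /
        ∑ j, Real.exp (β * ⟪z, u (s j)⟫) := by
  have hk1 : 1 ≤ k := hk ▸ Finset.card_pos.mpr hV
  set c := Real.sqrt (k : ℝ) with hc
  have hcpos : 0 < c := Real.sqrt_pos.mpr (by exact_mod_cast Nat.pos_of_ne_zero (by omega))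
  have hcne : c ≠ 0 := ne_of_gt hcpos
  have hzs : ∀ v, ⟪zstar, u v⟫ = if v ∈ V then c⁻¹ else 0 := by
    intro v
    rw [hzstar, real_inner_smul_left, sum_inner]
    have h1 : ∀ w ∈ V, ⟪u w, u v⟫ = if w = v then (1:ℝ) else 0 := fun w _ =>
      orthonormal_iff_ite.mp hu w v
    rw [Finset.sum_congr rfl h1, Finset.sum_ite_eq' V v (fun _ => (1:ℝ))]
    by_cases hv : v ∈ V <;> simp [hv]
  have hres : ∀ v, |⟪z - zstar, u v⟫| ≤ 1 / (4 * c) := by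
    intro v
    calc |⟪z - zstar, u v⟫| ≤ ‖z - zstar‖ * ‖u v‖ := abs_real_inner_le_norm _ _
      _ = ‖z - zstar‖ := by rw [hu.1 v, mul_one]
      _ ≤ 1 / (4 * c) := hz
  have hdec : ∀ v, ⟪z, u v⟫ = ⟪zstar, u v⟫ + ⟪z - zstar, u v⟫ := by
    intro v; rw [inner_sub_left]; ring
  have hin : ∀ v ∈ V, 3 / (4 * c) ≤ ⟪z, u v⟫ := by
    intro v hv
    have h2 := abs_le.mp (hres v)
    rw [hdec v, hzs v, if_pos hv]
    have h3 : c⁻¹ - 1 / (4 * c) = 3 / (4 * c) := by field_simp; ring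
    linarith [h2.1]
  have hout : ∀ v, v ∉ V → ⟪z, u v⟫ ≤ 1 / (4 * c) := by
    intro v hv
    have h2 := abs_le.mp (hres v)
    rw [hdec v, hzs v, if_neg hv]
    have h14 : (0:ℝ) ≤ 1 / (4 * c) := by positivity
    linarith [h2.2]
  obtain ⟨i₀, hi₀⟩ := hFne
  have hi₀V : s i₀ ∈ V := by
    have h := hF ▸ hi₀
    simpa using h
  have hmain := softmax_aux M (fun i => β * ⟪z, u (s i)⟫) F i₀ hi₀
      (β * (1 / (4 * c))) (β * (3 / (4 * c)))
      (mul_le_mul_of_nonneg_left (hin _ hi₀V) hβ.le)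
      (fun i hi => by
        have hiV : s i ∉ V := by
          intro hmem
          exact hi (hF ▸ Finset.mem_filter.mpr ⟨Finset.mem_univ i, hmem⟩)
        exact mul_le_mul_of_nonneg_left (hout _ hiV) hβ.le)
  rw [← Finset.sum_div]
  have hexp : β * (1 / (4 * c)) - β * (3 / (4 * c)) = -(β / (2 * c)) := by
    field_simp; ring
  rw [hexp] at hmain
  exact hmain
end
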